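/- Let R be an M×M Hermitian positive definite matrix with distinct eigenvalues 0 < γ₁ < … < γ_M̄ of multiplicities K₁, …, K_M̄, and let N be a positive integer. For real z, any real solution ω of z = ω(1 − (1/N)Σₘ Kₘγₘ/(γₘ − ω)) that additionally satisfies (1/N)Σₘ Kₘ(γₘ/(γₘ − ω))² < 1 is unique: there is at most one such real ω for each real z. -/
import Mathlib


open scoped BigOperators

/-- Uniqueness of the real branch of the inverse Stieltjes map: for each real `z`
there is at most one real `ω` (not a pole) with
`z = ω(1 − (1/N)Σₘ Kₘγₘ/(γₘ − ω))` and `(1/N)Σₘ Kₘ(γₘ/(γₘ − ω))² < 1`. -/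
theorem stmt8 (Mbar N : ℕ) (hN : 0 < N) (γ : Fin Mbar → ℝ) (K : Fin Mbar → ℕ)
    (hγpos : ∀ m, 0 < γ m) (hγmono : StrictMono γ)
    (z ω ω' : ℝ) (hω : ∀ m, ω ≠ γ m) (hω' : ∀ m, ω' ≠ γ m)
    (h₁ : z = ω * (1 - (1 / N : ℝ) * ∑ m, (K m : ℝ) * γ m / (γ m - ω)))
    (h₂ : z = ω' * (1 - (1 / N : ℝ) * ∑ m, (K m : ℝ) * γ m / (γ m - ω')))
    (hd₁ : (1 / N : ℝ) * ∑ m, (K m : ℝ) * (γ m / (γ m - ω)) ^ 2 < 1)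
    (hd₂ : (1 / N : ℝ) * ∑ m, (K m : ℝ) * (γ m / (γ m - ω')) ^ 2 < 1) :
    ω = ω' := by
  by_contra h
  have hne : ω - ω' ≠ 0 := sub_ne_zero.mpr h
  set c : ℝ := (1 / N : ℝ) with hc
  have hcpos : (0:ℝ) ≤ c := by positivity
  -- termwise identity
  have hterm : ∀ m : Fin Mbar,
      ω * ((K m : ℝ) * γ m / (γ m - ω)) - ω' * ((K m : ℝ) * γ m / (γ m - ω'))
      = (ω - ω') * ((K m : ℝ) * ((γ m / (γ m - ω)) * (γ m / (γ m - ω')))) := by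
    intro m
    have h1 : γ m - ω ≠ 0 := sub_ne_zero.mpr (Ne.symm (hω m))
    have h2 : γ m - ω' ≠ 0 := sub_ne_zero.mpr (Ne.symm (hω' m))
    field_simp
    ring
  have e1 : ω - ω' = c * ∑ m, (ω * ((K m : ℝ) * γ m / (γ m - ω))
      - ω' * ((K m : ℝ) * γ m / (γ m - ω'))) := by
    rw [Finset.sum_sub_distrib, ← Finset.mul_sum, ← Finset.mul_sum]
    linear_combination h₂ - h₁
  have e2 : ∑ m, (ω * ((K m : ℝ) * γ m / (γ m - ω))
      - ω' * ((K m : ℝ) * γ m / (γ m - ω')))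
      = (ω - ω') * ∑ m, (K m : ℝ) * ((γ m / (γ m - ω)) * (γ m / (γ m - ω'))) := by
    rw [Finset.mul_sum]
    exact Finset.sum_congr rfl fun m _ => hterm m
  rw [e2] at e1
  have hone : c * ∑ m, (K m : ℝ) * ((γ m / (γ m - ω)) * (γ m / (γ m - ω'))) = 1 := by
    have : (ω - ω') * 1 = (ω - ω') * (c * ∑ m, (K m : ℝ) * ((γ m / (γ m - ω)) * (γ m / (γ m - ω')))) := by
      rw [mul_one]; linarith [e1]
    exact (mul_left_cancel₀ hne this).symm
  have hle : ∑ m, (K m : ℝ) * ((γ m / (γ m - ω)) * (γ m / (γ m - ω')))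
      ≤ (∑ m, (K m : ℝ) * (γ m / (γ m - ω)) ^ 2 + ∑ m, (K m : ℝ) * (γ m / (γ m - ω')) ^ 2) / 2 := by
    rw [← Finset.sum_add_distrib, Finset.sum_div]
    refine Finset.sum_le_sum fun m _ => ?_
    have hK : (0:ℝ) ≤ (K m : ℝ) := Nat.cast_nonneg _
    nlinarith [sq_nonneg (γ m / (γ m - ω) - γ m / (γ m - ω'))]
  have := mul_le_mul_of_nonneg_left hle hcpos
  nlinarith [hd₁, hd₂, hone, this]
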